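/- arXiv:1410.4102 — 5 statements merged into one kernel-verified Lean document; each statement's English description precedes it below -/
import Mathlib

section
/- Let Gi denote the Scorer function, Gi(z) = (1/π) · lim_{R→∞} ∫₀^R sin(zy + y³/3) dy, and for k ∈ ℕ let s_{0,2k} denote the Lommel function of even order given by the integral representation s_{0,2k}(x) = ∫₀^{π/2} cos(2kθ) · sin(x · sin θ) dθ. Then for every fixed a ∈ ℝ, lim_{k→∞} k^{1/3} · s_{0,2k}(2k − a·k^{1/3}) = −(π/2) · Gi(a). -/
/-!
Put `p = k^{1/3}`, so that `2k = 2p³` and `x = 2k - a k^{1/3} = 2p³ - a p`. By the product-to-sum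
formula, `s_{0,2k}(x)` is half the difference of `∫₀^{π/2} sin (2p³θ + x sin θ)` and
`∫₀^{π/2} sin (2p³θ - x sin θ)`. The first phase has derivative at least `2p³`, so by van der
Corput's first-derivative test the first integral is `O(p⁻³)`. The second phase is stationary at
`θ = 0`: on `[T/p, π/2]` its derivative is at least `p (4T²/π² - |a|)`, so after multiplication
by `p` that piece is `O(T⁻²)`, while on `[0, T/p]` the substitution `θ = y/p` turns `p ∫` into
`∫₀^T sin φ_p(y)` with `φ_p(y) → a y + y³/3`, i.e. into the truncated Scorer integral.
Letting first `p → ∞` and then `T → ∞` gives `-(π/2) Gi(a)`.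
-/

open Real Filter Topology Set intervalIntegral
open MeasureTheory (volume ae_of_all)

theorem intervalIntegral.integral_abs_eq_abs_integral {f : ℝ → ℝ} {A B : ℝ} (hAB : A ≤ B)
    (hf : (∀ y ∈ Icc A B, 0 ≤ f y) ∨ ∀ y ∈ Icc A B, f y ≤ 0) :
    ∫ y in A..B, |f y| = |∫ y in A..B, f y| := by
  rcases hf with hf | hf
  · rw [abs_of_nonneg (integral_nonneg hAB hf)]
    exact integral_congr fun y hy => abs_of_nonneg (hf y (uIcc_of_le hAB ▸ hy))
  · rw [abs_of_nonpos (neg_nonneg.mp (integral_neg (f := f) ▸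
      integral_nonneg hAB fun y hy => neg_nonneg.mpr (hf y hy))), ← integral_neg]
    exact integral_congr fun y hy => abs_of_nonpos (hf y (uIcc_of_le hAB ▸ hy))

/-- Van der Corput's first-derivative test, with the constant `3` of a single integration by parts
(two boundary terms and the remainder, each at most `1 / m`). -/
theorem abs_integral_sin_le_of_le_deriv {g g' g'' : ℝ → ℝ} {A B m : ℝ} (hAB : A ≤ B)
    (hm : 0 < m)
    (hg : ∀ y ∈ Icc A B, HasDerivAt g (g' y) y) (hg' : ∀ y ∈ Icc A B, HasDerivAt g' (g'' y) y)
    (hg'' : ContinuousOn g'' (Icc A B)) (hmg' : ∀ y ∈ Icc A B, m ≤ g' y)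
    (hsign : (∀ y ∈ Icc A B, 0 ≤ g'' y) ∨ ∀ y ∈ Icc A B, g'' y ≤ 0) :
    |∫ y in A..B, sin (g y)| ≤ 3 / m := by
  have hI : uIcc A B = Icc A B := uIcc_of_le hAB
  have hg'pos : ∀ y ∈ Icc A B, 0 < g' y := fun y hy => hm.trans_le (hmg' y hy)
  -- integrate by parts `sin (g y) = (g' y)⁻¹ * (sin (g y) * g' y)`
  set u : ℝ → ℝ := fun y => (g' y)⁻¹
  set u' : ℝ → ℝ := fun y => -g'' y / g' y ^ 2
  have hu : ∀ y ∈ uIcc A B, HasDerivAt u (u' y) y := fun y hy =>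
    (hg' y (hI ▸ hy)).inv (hg'pos y (hI ▸ hy)).ne'
  have hu_bound : ∀ y ∈ Icc A B, 0 ≤ u y ∧ u y ≤ 1 / m := fun y hy =>
    ⟨(inv_pos.mpr (hg'pos y hy)).le, one_div m ▸ inv_anti₀ hm (hmg' y hy)⟩
  have hu'_int : IntervalIntegrable u' volume A B := by
    refine ContinuousOn.intervalIntegrable ?_
    rw [hI]
    exact hg''.neg.div (fun y hy => ((hg' y hy).continuousAt.continuousWithinAt).pow 2)
      fun y hy => pow_ne_zero 2 (hg'pos y hy).ne'
  have hv : ∀ y ∈ uIcc A B, HasDerivAt (fun y => -cos (g y)) (sin (g y) * g' y) y := fun y hy =>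
    ((hg y (hI ▸ hy)).cos.neg).congr_deriv (by ring)
  have hv'_int : IntervalIntegrable (fun y => sin (g y) * g' y) volume A B := by
    refine ContinuousOn.intervalIntegrable ?_
    rw [hI]
    exact fun y hy => ((continuous_sin.continuousAt.comp (hg y hy).continuousAt).mul
      (hg' y hy).continuousAt).continuousWithinAt
  have hibp : ∫ y in A..B, sin (g y) =
      u B * -cos (g B) - u A * -cos (g A) - ∫ y in A..B, u' y * -cos (g y) := by
    rw [← integral_mul_deriv_eq_deriv_mul hu hv hu'_int hv'_int]
    refine integral_congr fun y hy => ?_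
    simp only [u]
    field_simp [(hg'pos y (hI ▸ hy)).ne']
  have hbdry : ∀ y ∈ Icc A B, |u y * -cos (g y)| ≤ 1 / m := fun y hy => by
    rw [abs_mul, abs_neg, abs_of_nonneg (hu_bound y hy).1]
    exact mul_le_of_le_one_right (hu_bound y hy).1 (abs_cos_le_one _) |>.trans (hu_bound y hy).2
  have hu'_sign : (∀ y ∈ Icc A B, 0 ≤ u' y) ∨ ∀ y ∈ Icc A B, u' y ≤ 0 := by
    refine hsign.symm.imp (fun h y hy => ?_) (fun h y hy => ?_)
    · exact div_nonneg (neg_nonneg.mpr (h y hy)) (sq_nonneg _)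
    · exact div_nonpos_of_nonpos_of_nonneg (neg_nonpos.mpr (h y hy)) (sq_nonneg _)
  have hrem : |∫ y in A..B, u' y * -cos (g y)| ≤ 1 / m :=
    calc |∫ y in A..B, u' y * -cos (g y)|
        ≤ ∫ y in A..B, |u' y| := by
          rw [← Real.norm_eq_abs]
          refine norm_integral_le_of_norm_le hAB (Filter.Eventually.of_forall fun y _ => ?_)
            hu'_int.abs
          rw [Real.norm_eq_abs, abs_mul, abs_neg]
          exact mul_le_of_le_one_right (abs_nonneg _) (abs_cos_le_one _)
      _ = |u B - u A| := by
          rw [integral_abs_eq_abs_integral hAB hu'_sign, integral_eq_sub_of_hasDerivAt hu hu'_int]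
      _ ≤ 1 / m := abs_sub_le_of_nonneg_of_le (hu_bound B ⟨hAB, le_rfl⟩).1
          (hu_bound B ⟨hAB, le_rfl⟩).2 (hu_bound A ⟨le_rfl, hAB⟩).1 (hu_bound A ⟨le_rfl, hAB⟩).2
  rw [hibp]
  calc _ ≤ |u B * -cos (g B)| + |u A * -cos (g A)| + |∫ y in A..B, u' y * -cos (g y)| :=
        (abs_sub _ _).trans (add_le_add_left (abs_sub _ _) _)
    _ ≤ 1 / m + 1 / m + 1 / m :=
        add_le_add (add_le_add (hbdry B ⟨hAB, le_rfl⟩) (hbdry A ⟨le_rfl, hAB⟩)) hrem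
    _ = 3 / m := by ring

theorem tendsto_of_forall_eventually_dist_le {α β X : Type*} [PseudoMetricSpace X] {l : Filter α}
    {l' : Filter β} [l'.NeBot] {f : α → X} {g : β → α → X} {G : β → X} {e : β → ℝ} {L : X}
    (hg : ∀ T, Tendsto (g T) l (𝓝 (G T))) (hG : Tendsto G l' (𝓝 L)) (he : Tendsto e l' (𝓝 0))
    (hfg : ∀ᶠ T in l', ∀ᶠ x in l, dist (f x) (g T x) ≤ e T) :
    Tendsto f l (𝓝 L) := by
  refine Metric.tendsto_nhds.mpr fun ε hε => ?_
  obtain ⟨T, hGT, heT, hfgT⟩ := ((Metric.tendsto_nhds.mp hG (ε / 3) (by positivity)).and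
    ((he.eventually (gt_mem_nhds (by positivity : 0 < ε / 3))).and hfg)).exists
  filter_upwards [hfgT, Metric.tendsto_nhds.mp (hg T) (ε / 3) (by positivity)] with x hfx hgx
  calc dist (f x) L ≤ dist (f x) (g T x) + dist (g T x) (G T) + dist (G T) L :=
        dist_triangle4 _ _ _ _
    _ < ε / 3 + ε / 3 + ε / 3 := by gcongr; exact hfx.trans_lt heT
    _ = ε := by ring

theorem integral_cos_mul_mul_sin_mul_sin_eq (n x c : ℝ) :
    ∫ θ in 0..π / 2, cos (n * θ) * sin (x * sin θ) =
      ((∫ θ in 0..π / 2, sin (n * θ + x * sin θ)) - (∫ θ in 0..c, sin (n * θ - x * sin θ)) -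
        ∫ θ in c..π / 2, sin (n * θ - x * sin θ)) / 2 := by
  have hint : ∀ A B, IntervalIntegrable (fun θ => sin (n * θ - x * sin θ)) volume A B :=
    fun A B => (by fun_prop : Continuous _).intervalIntegrable A B
  rw [sub_sub, integral_add_adjacent_intervals (hint 0 c) (hint c (π / 2)),
    ← integral_sub ((by fun_prop : Continuous _).intervalIntegrable 0 (π / 2)) (hint 0 (π / 2)),
    ← integral_div]
  refine integral_congr fun θ _ => ?_
  simp only [sin_add, sin_sub]
  ring

theorem abs_integral_sin_mul_add_mul_sin_le {n x : ℝ} (hn : 0 < n) (hx : 0 ≤ x) :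
    |∫ θ in 0..π / 2, sin (n * θ + x * sin θ)| ≤ 3 / n := by
  refine abs_integral_sin_le_of_le_deriv (g' := fun θ => n + x * cos θ)
    (g'' := fun θ => -(x * sin θ)) (by positivity) hn
    (fun θ _ => ((hasDerivAt_id' θ).const_mul n |>.add ((hasDerivAt_sin θ).const_mul x))
      |>.congr_deriv (by ring))
    (fun θ _ => ((hasDerivAt_cos θ).const_mul x |>.const_add n).congr_deriv (by ring))
    (by fun_prop) (fun θ hθ => ?_) (Or.inr fun θ hθ => ?_)
  · have := cos_nonneg_of_mem_Icc ⟨by linarith [hθ.1, pi_pos], hθ.2⟩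
    nlinarith
  · have := sin_nonneg_of_nonneg_of_le_pi hθ.1 (by linarith [hθ.2, pi_pos])
    nlinarith

theorem abs_integral_sin_mul_sub_mul_sin_le {n x c m : ℝ} (hc : 0 ≤ c) (hcπ : c ≤ π / 2)
    (hx : 0 ≤ x) (hm : 0 < m) (hmn : ∀ θ ∈ Icc c (π / 2), m ≤ n - x * cos θ) :
    |∫ θ in c..π / 2, sin (n * θ - x * sin θ)| ≤ 3 / m := by
  refine abs_integral_sin_le_of_le_deriv (g' := fun θ => n - x * cos θ)
    (g'' := fun θ => x * sin θ) hcπ hm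
    (fun θ _ => ((hasDerivAt_id' θ).const_mul n |>.sub ((hasDerivAt_sin θ).const_mul x))
      |>.congr_deriv (by ring))
    (fun θ _ => ((hasDerivAt_cos θ).const_mul x |>.const_sub n).congr_deriv (by ring))
    (by fun_prop) hmn (Or.inl fun θ hθ => ?_)
  exact mul_nonneg hx
    (sin_nonneg_of_nonneg_of_le_pi (hc.trans hθ.1) (by linarith [hθ.2, pi_pos]))

theorem two_mul_pow_three_sub_mul_nonneg {a p : ℝ} (hp : |a| + 1 ≤ p) :
    0 ≤ 2 * p ^ 3 - a * p := by
  have hp₀ : 0 ≤ p := by linarith [abs_nonneg a]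
  have ha : a ≤ 2 * p ^ 2 := by nlinarith [le_abs_self a, abs_nonneg a]
  nlinarith

theorem mul_sub_abs_le_two_mul_pow_three_sub_mul_cos {a p T θ : ℝ} (hp : 0 < p) (hT : 0 ≤ T)
    (hθ : T / p ≤ θ) (hθπ : θ ≤ π / 2) :
    p * (4 / π ^ 2 * T ^ 2 - |a|) ≤ 2 * p ^ 3 - (2 * p ^ 3 - a * p) * cos θ := by
  have hθ₀ : 0 ≤ θ := (div_nonneg hT hp.le).trans hθ
  have hcos : cos θ ≤ 1 - 2 / π ^ 2 * θ ^ 2 :=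
    cos_le_one_sub_mul_cos_sq (abs_le.mpr ⟨by linarith [pi_pos], by linarith [pi_pos]⟩)
  have hTθ : T ^ 2 ≤ (p * θ) ^ 2 := pow_le_pow_left₀ hT ((div_le_iff₀' hp).mp hθ) 2
  have hquad : p * (4 / π ^ 2 * T ^ 2) ≤ 2 * p ^ 3 * (1 - cos θ) :=
    calc p * (4 / π ^ 2 * T ^ 2) ≤ p * (4 / π ^ 2 * (p * θ) ^ 2) := by gcongr
      _ = 2 * p ^ 3 * (2 / π ^ 2 * θ ^ 2) := by ring
      _ ≤ 2 * p ^ 3 * (1 - cos θ) := by gcongr; linarith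
  have hlin : p * -|a| ≤ p * (a * cos θ) := by
    gcongr
    have : |a * cos θ| ≤ |a| :=
      abs_mul a _ ▸ mul_le_of_le_one_right (abs_nonneg a) (abs_cos_le_one θ)
    exact (abs_le.mp this).1
  linarith

theorem abs_phase_sub_cubic_le (a y p : ℝ) (hp : 0 < p) (hy : |y| ≤ p) :
    |2 * p ^ 3 * (y / p) - (2 * p ^ 3 - a * p) * sin (y / p) - (a * y + y ^ 3 / 3)| ≤
      (|y| ^ 5 / 50 + |a| * |y| ^ 3 / 6) / p ^ 2 := by
  set u := y / p with hu
  have hyu : y = p * u := by rw [hu]; field_simp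
  have hu1 : |u| ≤ 1 := by rw [hu, abs_div, abs_of_pos hp]; exact div_le_one_of_le₀ hy hp.le
  have hsplit : 2 * p ^ 3 * u - (2 * p ^ 3 - a * p) * sin u - (a * y + y ^ 3 / 3) =
      -(2 * p ^ 3) * (sin u - (u - u ^ 3 / 6)) - a * p * (u - sin u) := by
    rw [hyu]; ring
  rw [hsplit]
  calc _ ≤ 2 * p ^ 3 * (|u| ^ 5 / 100) + |a| * p * (|u| ^ 3 / 6) := by
        refine (abs_sub _ _).trans (add_le_add ?_ ?_)
        · rw [abs_mul, abs_neg, abs_of_pos (by positivity)]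
          exact mul_le_mul_of_nonneg_left (sin_bound hu1) (by positivity)
        · rw [abs_mul, abs_mul, abs_of_pos hp]
          exact mul_le_mul_of_nonneg_left (abs_sub_sin_le u) (by positivity)
    _ = (|y| ^ 5 / 50 + |a| * |y| ^ 3 / 6) / p ^ 2 := by
        rw [hyu, abs_mul, abs_of_pos hp]; field_simp; ring

theorem tendsto_phase_comp_div (a y : ℝ) :
    Tendsto (fun p => 2 * p ^ 3 * (y / p) - (2 * p ^ 3 - a * p) * sin (y / p)) atTop
      (𝓝 (a * y + y ^ 3 / 3)) := by
  have hbound : Tendsto (fun p : ℝ => (|y| ^ 5 / 50 + |a| * |y| ^ 3 / 6) / p ^ 2) atTop (𝓝 0) :=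
    tendsto_const_nhds.div_atTop (tendsto_pow_atTop two_ne_zero)
  refine tendsto_iff_norm_sub_tendsto_zero.mpr (squeeze_zero_norm' ?_ hbound)
  filter_upwards [eventually_ge_atTop (|y| + 1)] with p hp
  rw [norm_norm]
  exact abs_phase_sub_cubic_le a y p (by linarith [abs_nonneg y]) (by linarith)

theorem tendsto_integral_sin_phase_comp_div (a T : ℝ) :
    Tendsto
      (fun p => ∫ y in 0..T, sin (2 * p ^ 3 * (y / p) - (2 * p ^ 3 - a * p) * sin (y / p)))
      atTop (𝓝 (∫ y in 0..T, sin (a * y + y ^ 3 / 3))) :=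
  tendsto_integral_filter_of_dominated_convergence (fun _ => 1)
    (Eventually.of_forall fun p => (by fun_prop : Continuous _).aestronglyMeasurable)
    (Eventually.of_forall fun p => ae_of_all _ fun y _ => by
      rw [Real.norm_eq_abs]; exact abs_sin_le_one _)
    intervalIntegrable_const
    (ae_of_all _ fun y _ =>
      (continuous_sin.tendsto _).comp (tendsto_phase_comp_div a y))

theorem tendsto_mul_integral_sin_phase_add (a : ℝ) :
    Tendsto (fun p => p * ∫ θ in 0..π / 2, sin (2 * p ^ 3 * θ + (2 * p ^ 3 - a * p) * sin θ))
      atTop (𝓝 0) := by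
  have hbound : Tendsto (fun p : ℝ => 3 / 2 / p ^ 2) atTop (𝓝 0) :=
    tendsto_const_nhds.div_atTop (tendsto_pow_atTop two_ne_zero)
  refine squeeze_zero_norm' ?_ hbound
  filter_upwards [eventually_ge_atTop (|a| + 1)] with p hp
  have hp₀ : 0 < p := by linarith [abs_nonneg a]
  have hx := two_mul_pow_three_sub_mul_nonneg hp
  calc ‖p * ∫ θ in 0..π / 2, sin (2 * p ^ 3 * θ + (2 * p ^ 3 - a * p) * sin θ)‖
      ≤ p * (3 / (2 * p ^ 3)) := by
        rw [norm_mul, Real.norm_eq_abs, Real.norm_eq_abs, abs_of_pos hp₀]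
        exact mul_le_mul_of_nonneg_left (abs_integral_sin_mul_add_mul_sin_le (by positivity) hx)
          hp₀.le
    _ = 3 / 2 / p ^ 2 := by field_simp

theorem abs_mul_integral_sin_phase_sub_le {a T p : ℝ} (hT : 0 ≤ T)
    (hm : 0 < 4 / π ^ 2 * T ^ 2 - |a|) (hp : 0 < p) (hTp : T / p ≤ π / 2)
    (hx : 0 ≤ 2 * p ^ 3 - a * p) :
    |p * ∫ θ in T / p..π / 2, sin (2 * p ^ 3 * θ - (2 * p ^ 3 - a * p) * sin θ)| ≤
      3 / (4 / π ^ 2 * T ^ 2 - |a|) := by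
  have hJ := abs_integral_sin_mul_sub_mul_sin_le (div_nonneg hT hp.le) hTp hx (mul_pos hp hm)
    fun θ hθ => mul_sub_abs_le_two_mul_pow_three_sub_mul_cos hp hT hθ.1 hθ.2
  calc _ ≤ p * (3 / (p * (4 / π ^ 2 * T ^ 2 - |a|))) := by
        rw [abs_mul, abs_of_pos hp]; exact mul_le_mul_of_nonneg_left hJ hp.le
    _ = _ := by field_simp

theorem tendsto_mul_integral_cos_mul_sin_phase (a I : ℝ)
    (hI : Tendsto (fun R => ∫ y in 0..R, sin (a * y + y ^ 3 / 3)) atTop (𝓝 I)) :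
    Tendsto
      (fun p => p * ∫ θ in 0..π / 2, cos (2 * p ^ 3 * θ) * sin ((2 * p ^ 3 - a * p) * sin θ))
      atTop (𝓝 (-(I / 2))) := by
  set m : ℝ → ℝ := fun T => 4 / π ^ 2 * T ^ 2 - |a|
  have hm : Tendsto m atTop atTop := tendsto_atTop_add_const_right _ _
    ((tendsto_pow_atTop two_ne_zero).const_mul_atTop (by positivity))
  -- `g T p` drops the `-` integral over `[T/p, π/2]`; the rest is rescaled by `θ = y/p`
  refine tendsto_of_forall_eventually_dist_le (l' := atTop) (e := fun T => 3 / m T / 2)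
    (g := fun T p =>
      ((p * ∫ θ in 0..π / 2, sin (2 * p ^ 3 * θ + (2 * p ^ 3 - a * p) * sin θ)) -
        ∫ y in 0..T, sin (2 * p ^ 3 * (y / p) - (2 * p ^ 3 - a * p) * sin (y / p))) / 2)
    (fun T => ((tendsto_mul_integral_sin_phase_add a).sub
      (tendsto_integral_sin_phase_comp_div a T)).div_const 2)
    (by simpa [neg_div] using (hI.const_sub 0).div_const 2)
    (by simpa using (tendsto_const_nhds.div_atTop hm).div_const 2) ?_
  filter_upwards [hm.eventually_gt_atTop 0, eventually_ge_atTop 0] with T hmT hT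
  filter_upwards [eventually_ge_atTop (|a| + 1), eventually_ge_atTop (T / (π / 2))]
    with p hpa hpT
  have hp : 0 < p := by linarith [abs_nonneg a]
  have hx := two_mul_pow_three_sub_mul_nonneg hpa
  have hTp : T / p ≤ π / 2 := (div_le_iff₀ hp).mpr (by rwa [div_le_iff₀' (by positivity)] at hpT)
  rw [integral_cos_mul_mul_sin_mul_sin_eq _ _ (T / p), integral_comp_div
    (fun θ => sin (2 * p ^ 3 * θ - (2 * p ^ 3 - a * p) * sin θ)) hp.ne', zero_div,
    smul_eq_mul, Real.dist_eq]
  calc _ = |p * ∫ θ in T / p..π / 2, sin (2 * p ^ 3 * θ - (2 * p ^ 3 - a * p) * sin θ)| / 2 := by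
        rw [← abs_neg, ← abs_two, ← abs_div]; congr 1; ring
    _ ≤ 3 / m T / 2 := by gcongr; exact abs_mul_integral_sin_phase_sub_le hT hmT hp hTp hx

/-- If `Gi` is the Scorer function (defined by the improper oscillatory
integral) and `s k` is the Lommel function `s_{0,2k}` (defined by its integral
representation), then for every fixed `a : ℝ`,
`k^(1/3) * s_{0,2k}(2k - a k^(1/3)) → -(π/2) * Gi a` as `k → ∞`. -/
theorem lommel_scorer_limit
    (Gi : ℝ → ℝ)
    (hGi : ∀ z : ℝ, Tendsto (fun R : ℝ => ∫ y in (0:ℝ)..R, Real.sin (z * y + y ^ 3 / 3))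
      atTop (nhds (π * Gi z)))
    (s : ℕ → ℝ → ℝ)
    (hs : ∀ (k : ℕ) (x : ℝ),
      s k x = ∫ θ in (0:ℝ)..(π / 2), Real.cos (2 * (k : ℝ) * θ) * Real.sin (x * Real.sin θ))
    (a : ℝ) :
    Tendsto (fun k : ℕ =>
        (k : ℝ) ^ ((1:ℝ)/3) * s k (2 * (k : ℝ) - a * (k : ℝ) ^ ((1:ℝ)/3)))
      atTop (nhds (-(π / 2) * Gi a)) := by
  have hcube : ∀ k : ℕ, ((k : ℝ) ^ ((1 : ℝ) / 3)) ^ 3 = k := fun k => by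
    rw [one_div, ← Real.rpow_natCast, ← Real.rpow_mul (Nat.cast_nonneg k)]; norm_num
  have hroot : Tendsto (fun k : ℕ => (k : ℝ) ^ ((1 : ℝ) / 3)) atTop atTop :=
    (tendsto_rpow_atTop (by norm_num)).comp tendsto_natCast_atTop_atTop
  convert (tendsto_mul_integral_cos_mul_sin_phase a _ (hGi a)).comp hroot using 2 with k
  · simp only [Function.comp_apply, hs, hcube]
  · ring
end

section
/- Let Ai denote the Airy function, Ai(z) = (1/π) · lim_{R→∞} ∫₀^R cos(zy + y³/3) dy, and for n ∈ ℕ let J_n denote the Bessel function of the first kind given by Bessel's integral J_n(x) = (1/π) ∫₀^π cos(nθ − x · sin θ) dθ. Then for every fixed a ∈ ℝ, lim_{n→∞} (n/2)^{1/3} · J_n(n − a·(n/2)^{1/3}) = Ai(a). -/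
/-!
Substituting `θ = y / h` with `h = (n / 2) ^ (1 / 3)` turns `π h J_n(n - a h)` into
`∫₀^{π h} cos φ_h(y) dy` with `φ_h(y) = 2 h² y - (2 h³ - a h) sin (y / h)`. On a fixed interval
`[0, R]` the Taylor expansion of `sin` gives `φ_h(y) = a y + y³ / 3 + O(1 / h²)`, so that part
tends to the truncated Airy integral. On `[R, π h]` the phase is convex with
`φ_h' ≥ 4 y² / π² - |a|`, so van der Corput's estimate bounds the tail by
`2 / (4 R² / π² - |a|)` uniformly in `h`. Letting first `h → ∞` and then `R → ∞` gives the limit.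
-/

open Real Filter MeasureTheory intervalIntegral Set Topology

theorem tendsto_of_eventually_dist_le_add {α β E : Type*} [PseudoMetricSpace E]
    {l : Filter α} {l' : Filter β} [l'.NeBot] {F : α → E} {G : β → E} {δ : β → ℝ} {L : E}
    (hG : Tendsto G l' (𝓝 L)) (hδ : Tendsto δ l' (𝓝 0))
    (hFG : ∀ᶠ R in l', ∀ ε > 0, ∀ᶠ x in l, dist (F x) (G R) ≤ δ R + ε) :
    Tendsto F l (𝓝 L) := by
  rw [Metric.tendsto_nhds]
  intro ε hε
  obtain ⟨R, hGR, hδR, hFGR⟩ :=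
    ((hG.eventually (Metric.ball_mem_nhds L (by positivity : 0 < ε / 3))).and
      ((hδ.eventually (gt_mem_nhds (by positivity : 0 < ε / 3))).and hFG)).exists
  filter_upwards [hFGR (ε / 3) (by positivity)] with x hx
  calc dist (F x) L ≤ dist (F x) (G R) + dist (G R) L := dist_triangle _ _ _
    _ < ε := by linarith [Metric.mem_ball.mp hGR]

theorem integral_cos_eq_of_hasDerivAt {φ φ' φ'' : ℝ → ℝ} {α β : ℝ} (hαβ : α ≤ β)
    (hφ : ∀ y ∈ Icc α β, HasDerivAt φ (φ' y) y) (hφ' : ∀ y ∈ Icc α β, HasDerivAt φ' (φ'' y) y)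
    (hφ'_ne : ∀ y ∈ Icc α β, φ' y ≠ 0)
    (hint : IntervalIntegrable (fun y => φ'' y / φ' y ^ 2) volume α β) :
    ∫ y in α..β, cos (φ y) = (φ' β)⁻¹ * sin (φ β) - (φ' α)⁻¹ * sin (φ α)
      + ∫ y in α..β, φ'' y / φ' y ^ 2 * sin (φ y) := by
  have hI : uIcc α β = Icc α β := uIcc_of_le hαβ
  have hIoo : ∀ y ∈ Ioo (min α β) (max α β), y ∈ Icc α β := fun y hy => by
    rw [min_eq_left hαβ, max_eq_right hαβ] at hy; exact Ioo_subset_Icc_self hy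
  have hφc : ContinuousOn φ (uIcc α β) :=
    hI ▸ fun y hy => (hφ y hy).continuousAt.continuousWithinAt
  have hφ'c : ContinuousOn φ' (uIcc α β) :=
    hI ▸ fun y hy => (hφ' y hy).continuousAt.continuousWithinAt
  rw [integral_congr (g := fun y => (φ' y)⁻¹ * (cos (φ y) * φ' y)) fun y hy => by
      field_simp [hφ'_ne y (hI ▸ hy)],
    integral_mul_deriv_eq_deriv_mul_of_hasDerivAt (u := fun y => (φ' y)⁻¹)
      (v := fun y => sin (φ y)) (hφ'c.inv₀ (hI ▸ hφ'_ne))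
      (continuous_sin.comp_continuousOn hφc)
      (fun y hy => (hφ' y (hIoo y hy)).fun_inv (hφ'_ne y (hIoo y hy)))
      (fun y hy => (hφ y (hIoo y hy)).sin) (by simpa only [Pi.neg_def, neg_div] using hint.neg)
      ((continuous_cos.comp_continuousOn hφc).mul hφ'c).intervalIntegrable]
  simp only [neg_div, neg_mul, intervalIntegral.integral_neg]
  ring

/-- Van der Corput's first-derivative estimate. -/
theorem abs_integral_cos_le_of_deriv_ge {φ φ' φ'' : ℝ → ℝ} {α β m : ℝ} (hαβ : α ≤ β)
    (hm : 0 < m) (hφ : ∀ y ∈ Icc α β, HasDerivAt φ (φ' y) y)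
    (hφ' : ∀ y ∈ Icc α β, HasDerivAt φ' (φ'' y) y) (hφ''_nonneg : ∀ y ∈ Icc α β, 0 ≤ φ'' y)
    (hφ'_ge : ∀ y ∈ Icc α β, m ≤ φ' y) :
    |∫ y in α..β, cos (φ y)| ≤ 2 / m := by
  have hα : α ∈ Icc α β := left_mem_Icc.mpr hαβ
  have hβ : β ∈ Icc α β := right_mem_Icc.mpr hαβ
  have hφ'_pos : ∀ y ∈ Icc α β, 0 < φ' y := fun y hy => hm.trans_le (hφ'_ge y hy)
  have hw_nonneg : ∀ y ∈ Icc α β, 0 ≤ φ'' y / φ' y ^ 2 :=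
    fun y hy => div_nonneg (hφ''_nonneg y hy) (sq_nonneg _)
  have hw_deriv : ∀ y ∈ Icc α β, HasDerivAt (fun y => -(φ' y)⁻¹) (φ'' y / φ' y ^ 2) y :=
    fun y hy => by simpa [neg_div] using ((hφ' y hy).fun_inv (hφ'_pos y hy).ne').fun_neg
  have hIoo : Ioo (min α β) (max α β) ⊆ Icc α β := by
    rw [min_eq_left hαβ, max_eq_right hαβ]; exact Ioo_subset_Icc_self
  have hw_int : IntervalIntegrable (fun y => φ'' y / φ' y ^ 2) volume α β :=
    intervalIntegrable_deriv_of_nonneg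
      (fun y hy => (hw_deriv y (uIcc_of_le hαβ ▸ hy)).continuousAt.continuousWithinAt)
      (fun y hy => hw_deriv y (hIoo hy)) (fun y hy => hw_nonneg y (hIoo hy))
  have hw_integral : ∫ y in α..β, φ'' y / φ' y ^ 2 = (φ' α)⁻¹ - (φ' β)⁻¹ := by
    rw [integral_eq_sub_of_hasDerivAt (fun y hy => hw_deriv y (uIcc_of_le hαβ ▸ hy)) hw_int]
    ring
  have hrest : |∫ y in α..β, φ'' y / φ' y ^ 2 * sin (φ y)| ≤ (φ' α)⁻¹ - (φ' β)⁻¹ := by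
    rw [← hw_integral, ← Real.norm_eq_abs]
    refine norm_integral_le_of_norm_le hαβ (Eventually.of_forall fun y hy => ?_) hw_int
    have hy := hw_nonneg y (Ioc_subset_Icc_self hy)
    rw [norm_mul, Real.norm_eq_abs, abs_of_nonneg hy]
    exact mul_le_of_le_one_right hy (abs_sin_le_one _)
  have hboundary : ∀ y ∈ Icc α β, |(φ' y)⁻¹ * sin (φ y)| ≤ (φ' y)⁻¹ := fun y hy => by
    rw [abs_mul, abs_of_pos (inv_pos.mpr (hφ'_pos y hy))]
    exact mul_le_of_le_one_right (inv_pos.mpr (hφ'_pos y hy)).le (abs_sin_le_one _)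
  calc |∫ y in α..β, cos (φ y)|
      ≤ (φ' β)⁻¹ + (φ' α)⁻¹ + ((φ' α)⁻¹ - (φ' β)⁻¹) := by
        rw [integral_cos_eq_of_hasDerivAt hαβ hφ hφ' (fun y hy => (hφ'_pos y hy).ne') hw_int]
        linarith [abs_add_le ((φ' β)⁻¹ * sin (φ β) - (φ' α)⁻¹ * sin (φ α))
          (∫ y in α..β, φ'' y / φ' y ^ 2 * sin (φ y)),
          abs_sub ((φ' β)⁻¹ * sin (φ β)) ((φ' α)⁻¹ * sin (φ α)), hboundary α hα, hboundary β hβ]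
    _ = 2 * (φ' α)⁻¹ := by ring
    _ ≤ 2 / m := by
        rw [div_eq_mul_inv]
        gcongr
        exact hφ'_ge α hα

/-- The phase `n θ - x sin θ` of Bessel's integral for `n = 2 h³` and `x = n - a h`,
in the Airy variable `y = h θ`. -/
noncomputable def besselAiryPhase (h a y : ℝ) : ℝ :=
  2 * h ^ 2 * y - (2 * h ^ 3 - a * h) * sin (y / h)

section BesselAiryPhase

variable {h a : ℝ}

theorem integral_cos_besselAiryPhase (hh : h ≠ 0) :
    ∫ y in (0)..π * h, cos (besselAiryPhase h a y)
      = h * ∫ θ in (0)..π, cos (2 * h ^ 3 * θ - (2 * h ^ 3 - a * h) * sin θ) := by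
  have hφ : ∀ y, besselAiryPhase h a y = 2 * h ^ 3 * (y / h) - (2 * h ^ 3 - a * h) * sin (y / h) :=
    fun y => by unfold besselAiryPhase; field_simp
  simp_rw [hφ]
  rw [integral_comp_div (fun θ => cos (2 * h ^ 3 * θ - (2 * h ^ 3 - a * h) * sin θ)) hh,
    zero_div, mul_div_cancel_right₀ π hh, smul_eq_mul]

theorem hasDerivAt_besselAiryPhase (hh : h ≠ 0) (y : ℝ) :
    HasDerivAt (besselAiryPhase h a) (2 * h ^ 2 - (2 * h ^ 2 - a) * cos (y / h)) y :=
  (((hasDerivAt_id' y).const_mul (2 * h ^ 2)).fun_sub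
    (((hasDerivAt_id' y).div_const h).sin.const_mul (2 * h ^ 3 - a * h))).congr_deriv
    (by field_simp)

theorem hasDerivAt_deriv_besselAiryPhase (y : ℝ) :
    HasDerivAt (fun y => 2 * h ^ 2 - (2 * h ^ 2 - a) * cos (y / h))
      ((2 * h ^ 2 - a) / h * sin (y / h)) y :=
  ((((hasDerivAt_id' y).div_const h).cos.const_mul (2 * h ^ 2 - a)).const_sub
    (2 * h ^ 2)).congr_deriv (by ring)

theorem sq_sub_abs_le_deriv_besselAiryPhase (hh : 0 < h) {y : ℝ} (hy : |y| ≤ π * h) :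
    4 / π ^ 2 * y ^ 2 - |a| ≤ 2 * h ^ 2 - (2 * h ^ 2 - a) * cos (y / h) := by
  have hu : |y / h| ≤ π := by rwa [abs_div, abs_of_pos hh, div_le_iff₀ hh]
  have hcos := cos_le_one_sub_mul_cos_sq hu
  have ha : -|a| ≤ a * cos (y / h) := by
    have := abs_mul a (cos (y / h)) ▸ mul_le_of_le_one_right (abs_nonneg a) (abs_cos_le_one _)
    linarith [neg_abs_le (a * cos (y / h))]
  have hy2 : 4 / π ^ 2 * y ^ 2 = 2 * h ^ 2 * (2 / π ^ 2 * (y / h) ^ 2) := by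
    field_simp; ring
  rw [hy2]
  nlinarith [sq_nonneg h]

theorem abs_besselAiryPhase_sub_le (hh : 0 < h) {y : ℝ} (hy : |y| ≤ h) :
    |besselAiryPhase h a y - (a * y + y ^ 3 / 3)| ≤ (|y| ^ 5 + |a| * |y| ^ 3) / h ^ 2 := by
  set u := y / h
  have hyu : y = h * u := (mul_div_cancel₀ y hh.ne').symm
  have hu : |u| ≤ 1 := by rwa [abs_div, abs_of_pos hh, div_le_one hh]
  have hsin5 : |u - sin u - u ^ 3 / 6| ≤ |u| ^ 5 / 100 := by
    rw [← abs_neg]; convert sin_bound hu using 2; ring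
  have hsin3 : |sin u - u| ≤ |u| ^ 3 / 6 := abs_sub_comm u (sin u) ▸ abs_sub_sin_le u
  calc |besselAiryPhase h a y - (a * y + y ^ 3 / 3)|
      = |2 * h ^ 3 * (u - sin u - u ^ 3 / 6) + a * h * (sin u - u)| := by
        unfold besselAiryPhase; rw [hyu, mul_div_cancel_left₀ u hh.ne']; ring_nf
    _ ≤ 2 * h ^ 3 * (|u| ^ 5 / 100) + |a| * h * (|u| ^ 3 / 6) := by
        refine (abs_add_le _ _).trans ?_
        simp only [abs_mul, abs_two, abs_pow, abs_of_pos hh]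
        gcongr
    _ ≤ (|y| ^ 5 + |a| * |y| ^ 3) / h ^ 2 := by
        rw [hyu, abs_mul, abs_of_pos hh, le_div_iff₀ (by positivity)]
        have := mul_nonneg (mul_nonneg (pow_nonneg hh.le 3) (pow_nonneg (abs_nonneg u) 3))
          (abs_nonneg a)
        have := mul_nonneg (pow_nonneg hh.le 5) (pow_nonneg (abs_nonneg u) 5)
        ring_nf
        linarith

theorem abs_integral_cos_besselAiryPhase_sub_le (hh : 0 < h) {R : ℝ} (hR : 0 ≤ R) (hRh : R ≤ h) :
    |∫ y in (0)..R, (cos (besselAiryPhase h a y) - cos (a * y + y ^ 3 / 3))|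
      ≤ R * (R ^ 5 + |a| * R ^ 3) / h ^ 2 := by
  have hbound : ∀ y ∈ uIoc 0 R, ‖cos (besselAiryPhase h a y) - cos (a * y + y ^ 3 / 3)‖
      ≤ (R ^ 5 + |a| * R ^ 3) / h ^ 2 := by
    intro y hy
    rw [uIoc_of_le hR] at hy
    have hyR : |y| ≤ R := by rw [abs_of_pos hy.1]; exact hy.2
    calc ‖cos (besselAiryPhase h a y) - cos (a * y + y ^ 3 / 3)‖
        ≤ |besselAiryPhase h a y - (a * y + y ^ 3 / 3)| := abs_cos_sub_cos_le _ _
      _ ≤ (|y| ^ 5 + |a| * |y| ^ 3) / h ^ 2 := abs_besselAiryPhase_sub_le hh (hyR.trans hRh)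
      _ ≤ (R ^ 5 + |a| * R ^ 3) / h ^ 2 := by gcongr
  have := norm_integral_le_of_norm_le_const hbound
  rw [Real.norm_eq_abs, sub_zero, abs_of_nonneg hR] at this
  exact this.trans_eq (by ring)

theorem abs_integral_cos_besselAiryPhase_tail_le {R : ℝ} (hR : 0 < R) (hRh : R ≤ π * h)
    (ha_h : a ≤ 2 * h ^ 2) (ha_R : |a| < 4 / π ^ 2 * R ^ 2) :
    |∫ y in R..π * h, cos (besselAiryPhase h a y)| ≤ 2 / (4 / π ^ 2 * R ^ 2 - |a|) := by
  have hh : 0 < h := pos_of_mul_pos_right (hR.trans_le hRh) pi_pos.le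
  refine abs_integral_cos_le_of_deriv_ge hRh (sub_pos.mpr ha_R)
    (fun y _ => hasDerivAt_besselAiryPhase hh.ne' y)
    (fun y _ => hasDerivAt_deriv_besselAiryPhase y) (fun y hy => ?_) (fun y hy => ?_)
  · have hy0 : 0 ≤ y / h := div_nonneg (hR.le.trans hy.1) hh.le
    have hyπ : y / h ≤ π := (div_le_iff₀ hh).mpr hy.2
    exact mul_nonneg (div_nonneg (by linarith [sq_nonneg h]) hh.le)
      (sin_nonneg_of_nonneg_of_le_pi hy0 hyπ)
  · have hyπ : |y| ≤ π * h := by rw [abs_of_pos (hR.trans_le hy.1)]; exact hy.2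
    calc 4 / π ^ 2 * R ^ 2 - |a| ≤ 4 / π ^ 2 * y ^ 2 - |a| := by
          gcongr; exact hy.1
      _ ≤ _ := sq_sub_abs_le_deriv_besselAiryPhase hh hyπ

end BesselAiryPhase

theorem tendsto_integral_cos_besselAiryPhase {a L : ℝ}
    (hL : Tendsto (fun R => ∫ y in (0)..R, cos (a * y + y ^ 3 / 3)) atTop (𝓝 L)) :
    Tendsto (fun h => ∫ y in (0)..π * h, cos (besselAiryPhase h a y)) atTop (𝓝 L) := by
  set D : ℝ → ℝ := fun R => 4 / π ^ 2 * R ^ 2 - |a|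
  have hD : Tendsto D atTop atTop := tendsto_atTop_add_const_right _ _
    ((tendsto_pow_atTop two_ne_zero).const_mul_atTop (by positivity))
  refine tendsto_of_eventually_dist_le_add hL ((tendsto_const_nhds (x := (2 : ℝ))).div_atTop hD) ?_
  filter_upwards [eventually_gt_atTop 0, hD.eventually_gt_atTop 0] with R hR hDR ε hε
  have hsmall : Tendsto (fun h => R * (R ^ 5 + |a| * R ^ 3) / h ^ 2) atTop (𝓝 0) :=
    tendsto_const_nhds.div_atTop (tendsto_pow_atTop two_ne_zero)
  filter_upwards [eventually_ge_atTop R, (tendsto_pow_atTop two_ne_zero).eventually_ge_atTop |a|,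
    hsmall.eventually (ge_mem_nhds hε)] with h hRh ha_h hsmall_h
  have hh : 0 < h := hR.trans_le hRh
  have hRπh : R ≤ π * h := hRh.trans (le_mul_of_one_le_left hh.le (by linarith [pi_gt_three]))
  have hsplit : (∫ y in (0)..π * h, cos (besselAiryPhase h a y))
      - ∫ y in (0)..R, cos (a * y + y ^ 3 / 3)
      = (∫ y in (0)..R, (cos (besselAiryPhase h a y) - cos (a * y + y ^ 3 / 3)))
        + ∫ y in R..π * h, cos (besselAiryPhase h a y) := by
    have hcont : Continuous fun y => cos (besselAiryPhase h a y) :=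
      continuous_cos.comp (continuous_iff_continuousAt.mpr fun y =>
        (hasDerivAt_besselAiryPhase hh.ne' y).continuousAt)
    rw [← integral_add_adjacent_intervals (hcont.intervalIntegrable 0 R)
      (hcont.intervalIntegrable R (π * h)), intervalIntegral.integral_sub
      (hcont.intervalIntegrable 0 R)
      ((by fun_prop : Continuous fun y : ℝ => cos (a * y + y ^ 3 / 3)).intervalIntegrable 0 R)]
    ring
  rw [Real.dist_eq, hsplit]
  calc _ ≤ _ := abs_add_le _ _
    _ ≤ ε + 2 / D R := add_le_add
        ((abs_integral_cos_besselAiryPhase_sub_le hh hR.le hRh).trans hsmall_h)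
        (abs_integral_cos_besselAiryPhase_tail_le hR hRπh
          (by linarith [le_abs_self a, sq_nonneg h]) (sub_pos.mp hDR))
    _ = 2 / D R + ε := add_comm _ _

/-- If `Ai` is the Airy function (defined by the improper oscillatory
integral) and `J n` is the Bessel function of the first kind of integer order `n`
(defined by Bessel's integral), then for every fixed `a : ℝ`,
`(n/2)^(1/3) * J_n(n - a (n/2)^(1/3)) → Ai a` as `n → ∞`. -/
theorem bessel_airy_limit
    (Ai : ℝ → ℝ)
    (hAi : ∀ z : ℝ, Tendsto (fun R : ℝ => ∫ y in (0:ℝ)..R, Real.cos (z * y + y ^ 3 / 3))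
      atTop (nhds (π * Ai z)))
    (J : ℕ → ℝ → ℝ)
    (hJ : ∀ (n : ℕ) (x : ℝ),
      J n x = (1 / π) * ∫ θ in (0:ℝ)..π, Real.cos ((n : ℝ) * θ - x * Real.sin θ))
    (a : ℝ) :
    Tendsto (fun n : ℕ =>
        ((n : ℝ) / 2) ^ ((1:ℝ)/3) * J n ((n : ℝ) - a * ((n : ℝ) / 2) ^ ((1:ℝ)/3)))
      atTop (nhds (Ai a)) := by
  have hscale : Tendsto (fun n : ℕ => ((n : ℝ) / 2) ^ ((1 : ℝ) / 3)) atTop atTop :=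
    (tendsto_rpow_atTop (by norm_num)).comp
      (tendsto_natCast_atTop_atTop.atTop_div_const two_pos)
  have hlim := ((tendsto_integral_cos_besselAiryPhase (hAi a)).comp hscale).const_mul π⁻¹
  rw [inv_mul_cancel_left₀ pi_ne_zero] at hlim
  refine hlim.congr' ?_
  filter_upwards [eventually_gt_atTop 0] with n hn
  have hh : 0 < ((n : ℝ) / 2) ^ ((1 : ℝ) / 3) := by positivity
  have hcube : (n : ℝ) = 2 * (((n : ℝ) / 2) ^ ((1 : ℝ) / 3)) ^ 3 := by
    rw [← rpow_natCast, ← rpow_mul (by positivity)]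
    norm_num
    ring
  rw [Function.comp_apply]
  generalize ((n : ℝ) / 2) ^ ((1 : ℝ) / 3) = h at hh hcube ⊢
  rw [integral_cos_besselAiryPhase hh.ne', hJ, hcube]
  field_simp
end

section
/- Let Ai denote the Airy function, Ai(z) = (1/π) · lim_{R→∞} ∫₀^R cos(zy + y³/3) dy, and for n ∈ ℕ let J_n denote the Bessel function of the first kind given by Bessel's integral J_n(x) = (1/π) ∫₀^π cos(nθ − x · sin θ) dθ. Then for every fixed a ∈ ℝ, lim_{n→∞} (n/2)^{2/3} · (d/dx) J_n(x) |_{x = n − a·(n/2)^{1/3}} = −Ai'(a), where Ai' is the derivative of Ai and (d/dx) J_n is the derivative of x ↦ J_n(x). -/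
/-!
Put `r = (n/2)^(1/3)`, so that `n = 2r³` and `x = 2r³ - ar`. Differentiating Bessel's integral
and substituting `θ = y / r` gives
`π r² J'ₙ(x) = ∫₀^{πr} r sin(y/r) sin(2r²y - (2r³ - ar) sin(y/r)) dy`, whose integrand tends to
`y sin(ay + y³/3)` as `r → ∞` because `r sin(y/r) → y` and `2r³(y/r - sin(y/r)) → y³/3`.
On the other side `-π Ai'(a) = lim_R ∫₀^R y sin(ay + y³/3) dy`.

Both phases have derivative at least a constant times `y²` away from the origin, so a single
integration by parts bounds every tail `∫_Y` by `O(1/Y)`, uniformly in `r` and locally uniformly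
in `a`. Uniformity in `a` lets us differentiate the improper Airy integral under the limit, and
uniformity in `r` lets us exchange `r → ∞` with the truncation `Y → ∞`.
-/

open Real Filter MeasureTheory intervalIntegral Set Topology

section Oscillatory

variable {c d : ℝ}

lemma abs_integral_mul_deriv_mul_sin_le {u u' φ φ' : ℝ → ℝ} (hcd : c ≤ d)
    (hu : ∀ y ∈ Icc c d, HasDerivAt u (u' y) y) (hφ : ∀ y ∈ Icc c d, HasDerivAt φ (φ' y) y)
    (hu' : ContinuousOn u' (Icc c d)) (hφ' : ContinuousOn φ' (Icc c d)) :
    |∫ y in c..d, u y * (φ' y * sin (φ y))| ≤ |u c| + |u d| + ∫ y in c..d, |u' y| := by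
  rw [← uIcc_of_le hcd] at hu hφ hu' hφ'
  have hφc : ContinuousOn φ (uIcc c d) := fun y hy => (hφ y hy).continuousAt.continuousWithinAt
  have hv : ∀ y ∈ uIcc c d, HasDerivAt (fun y => -cos (φ y)) (φ' y * sin (φ y)) y :=
    fun y hy => by simpa [mul_comm] using ((hφ y hy).cos).fun_neg
  rw [integral_mul_deriv_eq_deriv_mul hu hv (hu'.intervalIntegrable)
    ((hφ'.mul (continuous_sin.comp_continuousOn hφc)).intervalIntegrable)]
  have hcos : ∀ y, |-cos (φ y)| ≤ 1 := fun y => by rw [abs_neg]; exact abs_cos_le_one _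
  have hint : |∫ y in c..d, u' y * -cos (φ y)| ≤ ∫ y in c..d, |u' y| := by
    refine (abs_integral_le_integral_abs hcd).trans (integral_mono_on hcd ?_ ?_ fun y _ => ?_)
    · exact (hu'.mul (continuous_cos.comp_continuousOn hφc).neg).abs.intervalIntegrable
    · exact hu'.abs.intervalIntegrable
    · rw [abs_mul]; exact mul_le_of_le_one_right (abs_nonneg _) (hcos y)
  calc |u d * -cos (φ d) - u c * -cos (φ c) - ∫ y in c..d, u' y * -cos (φ y)|
      ≤ |u d| * |-cos (φ d)| + |u c| * |-cos (φ c)| + |∫ y in c..d, u' y * -cos (φ y)| := by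
        rw [← abs_mul, ← abs_mul]; exact (abs_sub _ _).trans (by gcongr; exact abs_sub _ _)
    _ ≤ |u c| + |u d| + ∫ y in c..d, |u' y| := by
        nlinarith [hcos d, hcos c, abs_nonneg (u c), abs_nonneg (u d)]

lemma integral_div_sq (hc : 0 < c) (hcd : c ≤ d) (C : ℝ) :
    ∫ y in c..d, C / y ^ 2 = C / c - C / d := by
  have hpos : ∀ y ∈ uIcc c d, 0 < y := fun y hy => hc.trans_le (uIcc_of_le hcd ▸ hy).1
  have hderiv : ∀ y ∈ uIcc c d, HasDerivAt (fun y => -C * y⁻¹) (C / y ^ 2) y := fun y hy =>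
    ((hasDerivAt_inv (hpos y hy).ne').const_mul (-C)).congr_deriv (by ring)
  rw [integral_eq_sub_of_hasDerivAt hderiv]
  · ring
  · exact (continuousOn_const.div (continuousOn_pow 2) fun y hy =>
      pow_ne_zero 2 (hpos y hy).ne').intervalIntegrable

lemma abs_div_sq_sub_le {y m K g g' p q : ℝ} (hy : 0 < y) (hm : 0 < m) (hp : m * y ^ 2 ≤ p)
    (hq : |q| ≤ K * y) (hg : |g| ≤ y) (hg' : |g'| ≤ 1) :
    |(g' * p - g * q) / p ^ 2| ≤ (1 / m + K / m ^ 2) / y ^ 2 := by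
  have hmy : 0 < m * y ^ 2 := by positivity
  have hp0 : 0 < p := hmy.trans_le hp
  have hK : 0 ≤ K := nonneg_of_mul_nonneg_left ((abs_nonneg q).trans hq) hy
  calc |(g' * p - g * q) / p ^ 2| = |g' / p - g * q / p ^ 2| := by
        congr 1; field_simp
    _ ≤ |g'| / p + |g| * |q| / p ^ 2 := by
        refine (abs_sub _ _).trans ?_
        rw [abs_div, abs_div, abs_mul, abs_of_pos hp0, abs_of_pos (pow_pos hp0 2)]
    _ ≤ 1 / (m * y ^ 2) + y * (K * y) / (m * y ^ 2) ^ 2 := by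
        gcongr
    _ = (1 / m + K / m ^ 2) / y ^ 2 := by field_simp

/-- Integrate `(g / p) · (p · sin ∘ φ)` by parts once, `p` being the phase derivative. -/
lemma abs_integral_mul_sin_le {g g' φ p q : ℝ → ℝ} {m K : ℝ} (hm : 0 < m) (hc : 0 < c)
    (hcd : c ≤ d) (hφ : ∀ y ∈ Icc c d, HasDerivAt φ (p y) y)
    (hp : ∀ y ∈ Icc c d, HasDerivAt p (q y) y) (hg : ∀ y ∈ Icc c d, HasDerivAt g (g' y) y)
    (hq : ContinuousOn q (Icc c d)) (hg' : ContinuousOn g' (Icc c d))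
    (hpm : ∀ y ∈ Icc c d, m * y ^ 2 ≤ p y) (hqK : ∀ y ∈ Icc c d, |q y| ≤ K * y)
    (hgy : ∀ y ∈ Icc c d, |g y| ≤ y) (hg'1 : ∀ y ∈ Icc c d, |g' y| ≤ 1) :
    |∫ y in c..d, g y * sin (φ y)| ≤ (3 / m + K / m ^ 2) / c := by
  have hpos : ∀ y ∈ Icc c d, 0 < y := fun y hy => hc.trans_le hy.1
  have hp0 : ∀ y ∈ Icc c d, 0 < p y := fun y hy =>
    (by have := hpos y hy; positivity : 0 < m * y ^ 2).trans_le (hpm y hy)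
  have hpc : ContinuousOn p (Icc c d) := fun y hy => (hp y hy).continuousAt.continuousWithinAt
  have hgc : ContinuousOn g (Icc c d) := fun y hy => (hg y hy).continuousAt.continuousWithinAt
  have hu' : ContinuousOn (fun y => (g' y * p y - g y * q y) / p y ^ 2) (Icc c d) :=
    ((hg'.mul hpc).sub (hgc.mul hq)).div (hpc.pow 2) fun y hy => pow_ne_zero 2 (hp0 y hy).ne'
  have hend : ∀ y ∈ Icc c d, |g y / p y| ≤ 1 / (m * c) := fun y hy => by
    rw [abs_div, abs_of_pos (hp0 y hy), div_le_div_iff₀ (hp0 y hy) (by positivity), one_mul]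
    calc |g y| * (m * c) ≤ y * (m * y) := by gcongr; exacts [(hpos y hy).le, hgy y hy, hy.1]
      _ = m * y ^ 2 := by ring
      _ ≤ p y := hpm y hy
  have hrw : ∫ y in c..d, g y * sin (φ y) = ∫ y in c..d, g y / p y * (p y * sin (φ y)) :=
    integral_congr fun y hy => by field_simp [(hp0 y (uIcc_of_le hcd ▸ hy)).ne']
  have hvariation : ∫ y in c..d, |(g' y * p y - g y * q y) / p y ^ 2|
      ≤ (1 / m + K / m ^ 2) / c := by
    refine (integral_mono_on hcd (hu'.abs.intervalIntegrable_of_Icc hcd) ?_ fun y hy =>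
      abs_div_sq_sub_le (hpos y hy) hm (hpm y hy) (hqK y hy) (hgy y hy) (hg'1 y hy)).trans ?_
    · exact (continuousOn_const.div (continuousOn_pow 2) fun y hy =>
        pow_ne_zero 2 (hpos y hy).ne').intervalIntegrable_of_Icc hcd
    · have hK : 0 ≤ K := nonneg_of_mul_nonneg_left
        ((abs_nonneg _).trans (hqK c ⟨le_rfl, hcd⟩)) hc
      rw [integral_div_sq hc hcd]
      have : 0 ≤ (1 / m + K / m ^ 2) / d := by have := hc.trans_le hcd; positivity
      linarith
  rw [hrw, show (3 / m + K / m ^ 2) / c = 1 / (m * c) + 1 / (m * c) + (1 / m + K / m ^ 2) / c by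
    field_simp; ring]
  refine (abs_integral_mul_deriv_mul_sin_le hcd
    (fun y hy => (hg y hy).div (hp y hy) (hp0 y hy).ne') hφ hu' hpc).trans ?_
  gcongr
  exacts [hend c ⟨le_rfl, hcd⟩, hend d ⟨hcd, le_rfl⟩]

end Oscillatory

lemma hasDerivAt_integral_of_deriv_le {F F' : ℝ → ℝ → ℝ} {bound : ℝ → ℝ} {a b : ℝ}
    (hF : ∀ x, Continuous (F x)) (hF' : ∀ x, Continuous (F' x)) (hbound : Continuous bound)
    (hderiv : ∀ x t, HasDerivAt (F · t) (F' x t) x) (hle : ∀ x t, |F' x t| ≤ bound t) (x : ℝ) :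
    HasDerivAt (fun x => ∫ t in a..b, F x t) (∫ t in a..b, F' x t) x :=
  (hasDerivAt_integral_of_dominated_loc_of_deriv_le (s := univ) univ_mem
    (Eventually.of_forall fun x => (hF x).aestronglyMeasurable) ((hF x).intervalIntegrable a b)
    (hF' x).aestronglyMeasurable (ae_of_all _ fun t _ x _ => hle x t)
    (hbound.intervalIntegrable a b) (ae_of_all _ fun t _ x _ => hderiv x t)).2

/-- `-π Ai'(z)` is the limit of `airyDerivTrunc R z` as `R → ∞`. -/
noncomputable def airyDerivTrunc (R z : ℝ) : ℝ := ∫ y in (0:ℝ)..R, y * sin (z * y + y ^ 3 / 3)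

noncomputable def airyDerivLim (z : ℝ) : ℝ := limUnder atTop fun R => airyDerivTrunc R z

lemma hasDerivAt_integral_airy (R z : ℝ) :
    HasDerivAt (fun x => ∫ y in (0:ℝ)..R, cos (x * y + y ^ 3 / 3)) (-airyDerivTrunc R z) z := by
  rw [airyDerivTrunc, ← intervalIntegral.integral_neg]
  refine hasDerivAt_integral_of_deriv_le (F := fun x y => cos (x * y + y ^ 3 / 3))
    (F' := fun x y => -(y * sin (x * y + y ^ 3 / 3))) (fun x => by fun_prop) (fun x => by fun_prop)
    continuous_abs (fun x y => ?_) (fun x y => ?_) z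
  · simpa [mul_comm] using (((hasDerivAt_id x).mul_const y).add_const (y ^ 3 / 3)).cos
  · rw [abs_neg, abs_mul]; exact mul_le_of_le_one_right (abs_nonneg y) (abs_sin_le_one _)

lemma abs_integral_airy_le {z c d : ℝ} (hc : 0 < c) (hzc : 2 * |z| ≤ c ^ 2) (hcd : c ≤ d) :
    |∫ y in c..d, y * sin (z * y + y ^ 3 / 3)| ≤ 14 / c := by
  have hpos : ∀ y ∈ Icc c d, 0 ≤ y := fun y hy => hc.le.trans hy.1
  have h := abs_integral_mul_sin_le (m := 1 / 2) (K := 2) (φ := fun y => z * y + y ^ 3 / 3)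
    (p := fun y => z + y ^ 2) (q := fun y => 2 * y) (g := id) (g' := fun _ => 1)
    (by norm_num) hc hcd
    (fun y _ => (((hasDerivAt_id y).const_mul z).fun_add
      ((hasDerivAt_pow 3 y).div_const 3)).congr_deriv (by push_cast; ring))
    (fun y _ => ((hasDerivAt_pow 2 y).const_add z).congr_deriv (by push_cast; ring))
    (fun y _ => hasDerivAt_id y) (by fun_prop) (by fun_prop)
    (fun y hy => by nlinarith [neg_abs_le z, hy.1, pow_le_pow_left₀ hc.le hy.1 2])
    (fun y hy => (abs_of_nonneg (by linarith [hpos y hy])).le)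
    (fun y hy => (abs_of_nonneg (hpos y hy)).le) (fun y _ => by norm_num)
  norm_num at h
  exact h

lemma abs_airyDerivTrunc_sub_le {z R S : ℝ} (hR : 0 < R) (hzR : 2 * |z| ≤ R ^ 2) (hRS : R ≤ S) :
    |airyDerivTrunc S z - airyDerivTrunc R z| ≤ 14 / R := by
  rw [airyDerivTrunc, airyDerivTrunc, integral_interval_sub_left
    (Continuous.intervalIntegrable (by fun_prop) _ _)
    (Continuous.intervalIntegrable (by fun_prop) _ _)]
  exact abs_integral_airy_le hR hzR hRS

lemma eventually_airy_tail_lt (B : ℝ) {ε : ℝ} (hε : 0 < ε) :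
    ∀ᶠ R in atTop, 0 < R ∧ 2 * B ≤ R ^ 2 ∧ 14 / R < ε := by
  filter_upwards [eventually_gt_atTop 0,
    (tendsto_pow_atTop two_ne_zero).eventually_ge_atTop (2 * B),
    (tendsto_const_nhds.div_atTop tendsto_id).eventually (gt_mem_nhds hε)] with R h₁ h₂ h₃
  exact ⟨h₁, h₂, h₃⟩

lemma tendsto_airyDerivTrunc (z : ℝ) :
    Tendsto (fun R => airyDerivTrunc R z) atTop (𝓝 (airyDerivLim z)) := by
  refine CauchySeq.tendsto_limUnder (Metric.cauchySeq_iff'.2 fun ε hε => ?_)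
  obtain ⟨R, hR, hzR, hRε⟩ := (eventually_airy_tail_lt |z| hε).exists
  exact ⟨R, fun S hS => (abs_airyDerivTrunc_sub_le hR hzR hS).trans_lt hRε⟩

lemma abs_airyDerivTrunc_sub_airyDerivLim_le {z R : ℝ} (hR : 0 < R) (hzR : 2 * |z| ≤ R ^ 2) :
    |airyDerivTrunc R z - airyDerivLim z| ≤ 14 / R := by
  refine le_of_tendsto (((tendsto_airyDerivTrunc z).const_sub _).abs) ?_
  filter_upwards [eventually_ge_atTop R] with S hS
  rw [abs_sub_comm]
  exact abs_airyDerivTrunc_sub_le hR hzR hS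

lemma tendstoUniformlyOn_airyDerivTrunc (B : ℝ) :
    TendstoUniformlyOn airyDerivTrunc airyDerivLim atTop {z | |z| ≤ B} := by
  refine Metric.tendstoUniformlyOn_iff.2 fun ε hε => ?_
  filter_upwards [eventually_airy_tail_lt B hε] with R ⟨hR, hBR, hRε⟩ z hz
  rw [dist_comm, dist_eq]
  have hzR : 2 * |z| ≤ R ^ 2 := by linarith [show |z| ≤ B from hz]
  exact (abs_airyDerivTrunc_sub_airyDerivLim_le hR hzR).trans_lt hRε

lemma hasDerivAt_airy {Ai : ℝ → ℝ}
    (hAi : ∀ z : ℝ, Tendsto (fun R : ℝ => ∫ y in (0:ℝ)..R, cos (z * y + y ^ 3 / 3))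
      atTop (𝓝 (π * Ai z))) (a : ℝ) :
    HasDerivAt Ai (-airyDerivLim a / π) a := by
  have hopen : IsOpen {z : ℝ | |z| < |a| + 1} := isOpen_lt continuous_abs continuous_const
  have hunif := Real.uniformContinuous_neg.comp_tendstoUniformlyOn
    ((tendstoUniformlyOn_airyDerivTrunc (|a| + 1)).mono fun z (hz : |z| < |a| + 1) => hz.le)
  have h := hasDerivAt_of_tendstoUniformlyOn hopen hunif
    (Eventually.of_forall fun R z _ => hasDerivAt_integral_airy R z) (fun z _ => hAi z)
    (by simp : a ∈ {z : ℝ | |z| < |a| + 1})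
  simpa [pi_ne_zero] using h.div_const π

lemma hasDerivAt_integral_bessel (ν x : ℝ) :
    HasDerivAt (fun x => ∫ θ in (0:ℝ)..π, cos (ν * θ - x * sin θ))
      (∫ θ in (0:ℝ)..π, sin θ * sin (ν * θ - x * sin θ)) x := by
  refine hasDerivAt_integral_of_deriv_le (F := fun x θ => cos (ν * θ - x * sin θ))
    (F' := fun x θ => sin θ * sin (ν * θ - x * sin θ)) (bound := fun _ => 1)
    (fun x => by fun_prop) (fun x => by fun_prop) continuous_const (fun x θ => ?_) (fun x θ => ?_) x
  · exact (((hasDerivAt_id x).mul_const (sin θ)).const_sub (ν * θ)).cos.congr_deriv (by simp; ring)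
  · rw [abs_mul]; exact mul_le_one₀ (abs_sin_le_one _) (abs_nonneg _) (abs_sin_le_one _)

/-- With `n = 2 r³` and `x = n - a r`, the substitution `θ = y / r` turns `π r² J'ₙ(x)` into
`∫ y in 0..π r, besselDerivScaled a r y`. -/
noncomputable def besselDerivScaled (a r y : ℝ) : ℝ :=
  r * sin (y / r) * sin (2 * r ^ 2 * y - (2 * r ^ 3 - a * r) * sin (y / r))

lemma continuous_besselDerivScaled (a r : ℝ) : Continuous (besselDerivScaled a r) := by
  unfold besselDerivScaled; fun_prop

lemma integral_besselDerivScaled (a : ℝ) {r : ℝ} (hr : 0 < r) :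
    ∫ y in (0:ℝ)..π * r, besselDerivScaled a r y
      = r ^ 2 * ∫ θ in (0:ℝ)..π, sin θ * sin (2 * r ^ 3 * θ - (2 * r ^ 3 - a * r) * sin θ) := by
  have h := smul_integral_comp_mul_left (a := 0) (b := π) (besselDerivScaled a r) r
  rw [mul_zero, mul_comm r π, smul_eq_mul] at h
  rw [← h, pow_two, mul_assoc]
  congr 1
  rw [← intervalIntegral.integral_const_mul]
  refine intervalIntegral.integral_congr fun θ _ => ?_
  simp only [besselDerivScaled, mul_div_cancel_left₀ θ hr.ne']
  ring_nf

lemma abs_mul_sin_div_le (r y : ℝ) : |r * sin (y / r)| ≤ |y| := by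
  rcases eq_or_ne r 0 with rfl | hr
  · simp
  · calc |r * sin (y / r)| ≤ |r| * |y / r| := by
          rw [abs_mul]; exact mul_le_mul_of_nonneg_left abs_sin_le_abs (abs_nonneg r)
      _ = |y| := by rw [abs_div]; field_simp

lemma tendsto_mul_sin_div_atTop (y : ℝ) : Tendsto (fun r => r * sin (y / r)) atTop (𝓝 y) := by
  have h : Tendsto (fun r => y * sinc (y / r)) atTop (𝓝 (y * sinc 0)) :=
    ((continuous_sinc.tendsto 0).comp (tendsto_const_nhds.div_atTop tendsto_id)).const_mul y
  rw [sinc_zero, mul_one] at h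
  refine h.congr' ?_
  filter_upwards [eventually_gt_atTop 0] with r hr
  rcases eq_or_ne y 0 with rfl | hy
  · simp
  · rw [sinc_of_ne_zero (div_ne_zero hy hr.ne')]; field_simp

lemma tendsto_mul_sub_sin_div_atTop (y : ℝ) :
    Tendsto (fun r => 2 * r ^ 3 * (y / r - sin (y / r))) atTop (𝓝 (y ^ 3 / 3)) := by
  refine tendsto_iff_norm_sub_tendsto_zero.2 (squeeze_zero_norm' ?_
    (tendsto_const_nhds.div_atTop (tendsto_pow_atTop two_ne_zero) : Tendsto
      (fun r : ℝ => |y| ^ 5 / 50 / r ^ 2) atTop (𝓝 0)))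
  filter_upwards [eventually_ge_atTop |y|, eventually_gt_atTop 0] with r hyr hr
  have hbound := sin_bound (x := y / r) (by rw [abs_div, abs_of_pos hr, div_le_one hr]; exact hyr)
  calc ‖‖2 * r ^ 3 * (y / r - sin (y / r)) - y ^ 3 / 3‖‖
      = 2 * r ^ 3 * |sin (y / r) - (y / r - (y / r) ^ 3 / 6)| := by
        rw [norm_norm, norm_eq_abs, ← abs_of_pos (by positivity : 0 < 2 * r ^ 3), ← abs_mul,
          abs_of_pos (by positivity : 0 < 2 * r ^ 3), ← abs_neg]
        congr 1; field_simp; ring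
    _ ≤ 2 * r ^ 3 * (|y / r| ^ 5 / 100) := by gcongr
    _ = |y| ^ 5 / 50 / r ^ 2 := by rw [abs_div, abs_of_pos hr]; field_simp; ring

lemma tendsto_besselDerivScaled (a y : ℝ) :
    Tendsto (fun r => besselDerivScaled a r y) atTop (𝓝 (y * sin (a * y + y ^ 3 / 3))) := by
  have hphase : Tendsto (fun r => 2 * r ^ 3 * (y / r - sin (y / r)) + a * (r * sin (y / r)))
      atTop (𝓝 (y ^ 3 / 3 + a * y)) :=
    (tendsto_mul_sub_sin_div_atTop y).add ((tendsto_mul_sin_div_atTop y).const_mul a)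
  rw [add_comm] at hphase
  refine ((tendsto_mul_sin_div_atTop y).mul
    ((continuous_sin.tendsto _).comp hphase)).congr' ?_
  filter_upwards [eventually_gt_atTop 0] with r hr
  simp only [besselDerivScaled, Function.comp_apply]
  congr 2
  field_simp
  ring

lemma tendsto_integral_besselDerivScaled_airyDerivTrunc (a Y : ℝ) :
    Tendsto (fun r => ∫ y in (0:ℝ)..Y, besselDerivScaled a r y) atTop
      (𝓝 (airyDerivTrunc Y a)) :=
  tendsto_integral_filter_of_dominated_convergence (fun y => |y|)
    (Eventually.of_forall fun r => (continuous_besselDerivScaled a r).aestronglyMeasurable)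
    (Eventually.of_forall fun r => ae_of_all _ fun y _ => by
      rw [besselDerivScaled, norm_mul, norm_eq_abs]
      exact mul_le_of_le_one_right (abs_nonneg _) (abs_sin_le_one _) |>.trans
        (abs_mul_sin_div_le r y))
    (continuous_abs.intervalIntegrable 0 Y)
    (ae_of_all _ fun y _ => tendsto_besselDerivScaled a y)

lemma abs_integral_besselDerivScaled_le {a r c : ℝ} (hr : 1 ≤ r) (hc : 0 < c)
    (hca : π ^ 2 * |a| ≤ 2 * c ^ 2) (hcr : c ≤ π * r) :
    |∫ y in c..π * r, besselDerivScaled a r y| ≤ (3 * π ^ 2 / 2 + (2 + |a|) * π ^ 4 / 4) / c := by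
  have hr0 : 0 < r := one_pos.trans_le hr
  have hrange : ∀ y ∈ Icc c (π * r), 0 ≤ y ∧ 0 ≤ y / r ∧ y / r ≤ π := fun y hy =>
    have : 0 ≤ y := hc.le.trans hy.1
    ⟨this, by positivity, (div_le_iff₀ hr0).2 (by linarith [hy.2])⟩
  have hdiv : ∀ y, HasDerivAt (fun y => y / r) (1 / r) y := fun y => (hasDerivAt_id y).div_const r
  have hp : ∀ y ∈ Icc c (π * r), 2 / π ^ 2 * y ^ 2 ≤ 2 * r ^ 2 - (2 * r ^ 2 - a) * cos (y / r) :=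
    fun y hy' => by
    obtain ⟨-, ht0, htπ⟩ := hrange y hy'
    have hcos := cos_le_one_sub_mul_cos_sq (x := y / r) (by rwa [abs_of_nonneg ht0])
    have hacos : -|a| ≤ a * cos (y / r) := by
      refine (abs_le.1 ?_).1
      rw [abs_mul]; exact mul_le_of_le_one_right (abs_nonneg a) (abs_cos_le_one _)
    have hrt : 2 * r ^ 2 * (2 / π ^ 2 * (y / r) ^ 2) = 2 * (2 / π ^ 2 * y ^ 2) := by field_simp
    have hay : |a| ≤ 2 / π ^ 2 * y ^ 2 := by
      rw [div_mul_eq_mul_div, le_div_iff₀ (by positivity)]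
      nlinarith [pow_le_pow_left₀ hc.le hy'.1 2]
    linarith [mul_le_mul_of_nonneg_left (le_sub_comm.1 hcos) (by positivity : 0 ≤ 2 * r ^ 2)]
  have hq : ∀ y ∈ Icc c (π * r), |(2 * r ^ 2 - a) / r * sin (y / r)| ≤ (2 + |a|) * y :=
    fun y hy' => by
    obtain ⟨hy0, ht0, -⟩ := hrange y hy'
    calc |(2 * r ^ 2 - a) / r * sin (y / r)| = |2 * r ^ 2 - a| * |sin (y / r)| / r := by
          rw [abs_mul, abs_div, abs_of_pos hr0]; ring
      _ ≤ (2 * r ^ 2 + |a|) * (y / r) / r := by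
          gcongr
          · exact (abs_sub _ _).trans_eq (by rw [abs_of_pos (by positivity)])
          · exact abs_sin_le_abs.trans_eq (abs_of_nonneg ht0)
      _ = (2 + |a| / r ^ 2) * y := by field_simp
      _ ≤ (2 + |a|) * y := by gcongr; exact div_le_self (abs_nonneg a) (one_le_pow₀ hr)
  have h := abs_integral_mul_sin_le (m := 2 / π ^ 2) (K := 2 + |a|)
    (φ := fun y => 2 * r ^ 2 * y - (2 * r ^ 3 - a * r) * sin (y / r))
    (p := fun y => 2 * r ^ 2 - (2 * r ^ 2 - a) * cos (y / r))
    (q := fun y => (2 * r ^ 2 - a) / r * sin (y / r))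
    (g := fun y => r * sin (y / r)) (g' := fun y => cos (y / r)) (by positivity) hc hcr
    (fun y _ => (((hasDerivAt_id y).const_mul _).fun_sub
      ((hdiv y).sin.const_mul _)).congr_deriv (by field_simp))
    (fun y _ => ((hasDerivAt_const y _).fun_sub
      ((hdiv y).cos.const_mul _)).congr_deriv (by field_simp; ring))
    (fun y _ => ((hdiv y).sin.const_mul r).congr_deriv (by field_simp))
    (by fun_prop) (by fun_prop) hp hq
    (fun y hy' => (abs_mul_sin_div_le r y).trans_eq (abs_of_nonneg (hrange y hy').1))
    (fun y _ => abs_cos_le_one _)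
  refine h.trans_eq ?_
  field_simp
  ring

lemma tendsto_of_approx {α β X : Type*} [PseudoMetricSpace X] {l : Filter α} {l' : Filter β}
    [l'.NeBot] {F : α → X} {G : β → α → X} {H : β → X} {e : β → ℝ} {x : X}
    (hG : ∀ y, Tendsto (G y) l (𝓝 (H y))) (hH : Tendsto H l' (𝓝 x)) (he : Tendsto e l' (𝓝 0))
    (hFG : ∀ᶠ y in l', ∀ᶠ r in l, dist (F r) (G y r) ≤ e y) : Tendsto F l (𝓝 x) := by
  refine Metric.tendsto_nhds.2 fun ε hε => ?_
  obtain ⟨y, hFGy, hHy, hey⟩ := (hFG.and ((Metric.tendsto_nhds.1 hH (ε / 3) (by positivity)).and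
    (he.eventually (gt_mem_nhds (by positivity : 0 < ε / 3))))).exists
  filter_upwards [hFGy, Metric.tendsto_nhds.1 (hG y) (ε / 3) (by positivity)] with r h₁ h₂
  calc dist (F r) x ≤ dist (F r) (G y r) + dist (G y r) (H y) + dist (H y) x :=
        dist_triangle4 _ _ _ _
    _ < ε := by linarith

lemma tendsto_integral_besselDerivScaled (a : ℝ) :
    Tendsto (fun r => ∫ y in (0:ℝ)..π * r, besselDerivScaled a r y) atTop
      (𝓝 (airyDerivLim a)) := by
  refine tendsto_of_approx (tendsto_integral_besselDerivScaled_airyDerivTrunc a)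
    (tendsto_airyDerivTrunc a) (e := fun Y => (3 * π ^ 2 / 2 + (2 + |a|) * π ^ 4 / 4) / Y)
    (tendsto_const_nhds.div_atTop tendsto_id) ?_
  filter_upwards [eventually_gt_atTop 0,
    (tendsto_pow_atTop two_ne_zero).eventually_ge_atTop (π ^ 2 * |a| / 2)] with Y hY hYa
  filter_upwards [eventually_ge_atTop 1, eventually_ge_atTop (Y / π)] with r hr hYr
  rw [dist_eq, integral_interval_sub_left
    ((continuous_besselDerivScaled a r).intervalIntegrable _ _)
    ((continuous_besselDerivScaled a r).intervalIntegrable _ _)]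
  exact abs_integral_besselDerivScaled_le hr hY (by linarith) ((div_le_iff₀' pi_pos).1 hYr)

/-- If `Ai` is the Airy function and `J n` is the Bessel function of the
first kind of integer order `n` (defined by Bessel's integral), then for every fixed
`a : ℝ`, `(n/2)^(2/3) * (d/dx) J_n(x) |_{x = n - a (n/2)^(1/3)} → -Ai'(a)` as `n → ∞`. -/
theorem bessel_deriv_airy_limit
    (Ai : ℝ → ℝ)
    (hAi : ∀ z : ℝ, Tendsto (fun R : ℝ => ∫ y in (0:ℝ)..R, Real.cos (z * y + y ^ 3 / 3))
      atTop (nhds (π * Ai z)))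
    (J : ℕ → ℝ → ℝ)
    (hJ : ∀ (n : ℕ) (x : ℝ),
      J n x = (1 / π) * ∫ θ in (0:ℝ)..π, Real.cos ((n : ℝ) * θ - x * Real.sin θ))
    (a : ℝ) :
    Tendsto (fun n : ℕ =>
        ((n : ℝ) / 2) ^ ((2:ℝ)/3) * deriv (J n) ((n : ℝ) - a * ((n : ℝ) / 2) ^ ((1:ℝ)/3)))
      atTop (nhds (-(deriv Ai a))) := by
  have hr : Tendsto (fun n : ℕ => ((n : ℝ) / 2) ^ ((1:ℝ) / 3)) atTop atTop :=
    (tendsto_rpow_atTop (by norm_num)).comp (tendsto_natCast_atTop_atTop.atTop_div_const two_pos)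
  rw [(hasDerivAt_airy hAi a).deriv, neg_div, neg_neg, ← inv_mul_eq_div π]
  refine (((tendsto_integral_besselDerivScaled a).comp hr).const_mul π⁻¹).congr' ?_
  filter_upwards [eventually_gt_atTop 0] with n hn
  set r := ((n : ℝ) / 2) ^ ((1:ℝ) / 3) with hr_def
  have hr0 : 0 < r := by positivity
  have hn : (n : ℝ) = 2 * r ^ 3 := by
    rw [hr_def, ← rpow_natCast, ← rpow_mul (by positivity)]; norm_num; ring
  have hr2 : ((n : ℝ) / 2) ^ ((2:ℝ) / 3) = r ^ 2 := by
    rw [hr_def, ← rpow_natCast, ← rpow_mul (by positivity)]; norm_num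
  rw [funext (hJ n), ((hasDerivAt_integral_bessel n _).const_mul (1 / π)).deriv, hr2,
    Function.comp_apply, integral_besselDerivScaled a hr0, hn]
  ring
end

section
/- For every z ∈ ℝ, the improper integral defining the Scorer function converges: the limit lim_{R→∞} ∫₀^R sin(zy + y³/3) dy exists (as a finite real number). -/
open Real Filter MeasureTheory intervalIntegral
open Set Topology

/-! On `[a, ∞)`, where the phase `φ y = z y + y³/3` has positive increasing derivative,
integrate by parts: `sin φ = (-cos φ / φ')' - cos φ · φ'' / φ'²`. The boundary term
`cos φ / φ'` tends to `0`, and `φ'' / φ'² = (-1 / φ')'` is nonnegative with `-1 / φ' → 0`,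
hence integrable on `(a, ∞)`; so `cos φ · φ'' / φ'²` is absolutely integrable there. -/

theorem tendsto_intervalIntegral_of_hasDerivAt_add {f F h : ℝ → ℝ} {a l : ℝ} (b : ℝ)
    (hf : Continuous f) (hderiv : ∀ y ∈ Ici a, HasDerivAt F (f y + h y) y)
    (hF : Tendsto F atTop (𝓝 l)) (hh : IntegrableOn h (Ioi a)) :
    Tendsto (fun R => ∫ y in b..R, f y) atTop
      (𝓝 ((∫ y in b..a, f y) + ((l - F a) - ∫ y in Ioi a, h y))) := by
  have hsplit : ∀ R ∈ Ici a, (∫ y in b..R, f y) =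
      (∫ y in b..a, f y) + ((F R - F a) - ∫ y in a..R, h y) := by
    intro R hR
    have hh_int : IntervalIntegrable h volume a R :=
      (intervalIntegrable_iff_integrableOn_Ioc_of_le hR).2 (hh.mono_set Ioc_subset_Ioi_self)
    have hftc : (∫ y in a..R, (f y + h y)) = F R - F a :=
      integral_eq_sub_of_hasDerivAt
        (fun y hy => hderiv y (by rw [uIcc_of_le hR] at hy; exact hy.1))
        ((hf.intervalIntegrable a R).add hh_int)
    rw [← integral_add_adjacent_intervals (hf.intervalIntegrable b a) (hf.intervalIntegrable a R),
      ← hftc, integral_add (hf.intervalIntegrable a R) hh_int]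
    ring
  refine Tendsto.congr' (eventually_atTop.2 ⟨a, fun R hR => (hsplit R hR).symm⟩) <|
    tendsto_const_nhds.add ((hF.sub tendsto_const_nhds).sub
    (intervalIntegral_tendsto_integral_Ioi a hh tendsto_id))

theorem exists_tendsto_intervalIntegral_sin_of_deriv_tendsto_atTop
    {φ φ' φ'' : ℝ → ℝ} {a : ℝ} (b : ℝ) (hφ : Continuous φ)
    (hφ' : ∀ y ∈ Ici a, HasDerivAt φ (φ' y) y)
    (hφ'' : ∀ y ∈ Ici a, HasDerivAt φ' (φ'' y) y) (hpos : ∀ y ∈ Ici a, 0 < φ' y)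
    (hφ''_nonneg : ∀ y ∈ Ici a, 0 ≤ φ'' y) (htop : Tendsto φ' atTop atTop) :
    ∃ L, Tendsto (fun R => ∫ y in b..R, sin (φ y)) atTop (𝓝 L) := by
  have hweight : IntegrableOn (fun y => φ'' y / φ' y ^ 2) (Ioi a) := by
    refine integrableOn_Ioi_deriv_of_nonneg' (g := fun y => -(φ' y)⁻¹) (fun y hy => ?_)
      (fun y hy => div_nonneg (hφ''_nonneg y (le_of_lt hy : a ≤ y)) (sq_nonneg _))
      (by simpa using htop.inv_tendsto_atTop.neg)
    have hd : HasDerivAt (fun y => -(φ' y)⁻¹) (-(-φ'' y / φ' y ^ 2)) y :=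
      ((hφ'' y hy).inv (hpos y hy).ne').neg
    simpa only [neg_div, neg_neg] using hd
  have hcorr : IntegrableOn (fun y => cos (φ y) * (φ'' y / φ' y ^ 2)) (Ioi a) :=
    hweight.bdd_mul (c := 1) (continuous_cos.comp hφ).aestronglyMeasurable
      (Eventually.of_forall fun y => by simpa using abs_cos_le_one (φ y))
  have hboundary : Tendsto (fun y => (φ' y)⁻¹ * -cos (φ y)) atTop (𝓝 0) :=
    htop.inv_tendsto_atTop.zero_mul_isBoundedUnder_le
      (isBoundedUnder_of ⟨1, fun y => by simpa using abs_cos_le_one (φ y)⟩)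
  refine ⟨_, tendsto_intervalIntegral_of_hasDerivAt_add b (continuous_sin.comp hφ)
    (fun y hy => ?_) hboundary hcorr⟩
  have hne : φ' y ≠ 0 := (hpos y hy).ne'
  have hd : HasDerivAt (fun y => (φ' y)⁻¹ * -cos (φ y))
      (-φ'' y / φ' y ^ 2 * -cos (φ y) + (φ' y)⁻¹ * -(-sin (φ y) * φ' y)) y :=
    ((hφ'' y hy).inv hne).mul (hφ' y hy).cos.neg
  convert hd using 1
  field_simp
  ring

/-- For every `z : ℝ`, the improper integral defining the Scorer function
converges: `lim_{R→∞} ∫₀^R sin (z y + y³/3) dy` exists as a finite real number. -/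
theorem scorer_integral_converges (z : ℝ) :
    ∃ L : ℝ, Tendsto (fun R : ℝ => ∫ y in (0:ℝ)..R, Real.sin (z * y + y ^ 3 / 3))
      atTop (nhds L) := by
  have hpos : ∀ y ∈ Ici (|z| + 1), 0 < z + y ^ 2 := fun y (hy : |z| + 1 ≤ y) => by
    nlinarith [neg_abs_le z, abs_nonneg z]
  refine exists_tendsto_intervalIntegral_sin_of_deriv_tendsto_atTop (φ' := fun y => z + y ^ 2)
    (φ'' := fun y => 2 * y) 0 (by fun_prop) (fun y _ => ?_) (fun y _ => ?_) hpos
    (fun y (hy : |z| + 1 ≤ y) => by nlinarith [abs_nonneg z])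
    (tendsto_atTop_add_const_left _ z (tendsto_pow_atTop two_ne_zero))
  · exact (((hasDerivAt_id y).const_mul z).add ((hasDerivAt_pow 3 y).div_const 3)).congr_deriv
      (by simp)
  · simpa using (hasDerivAt_pow 2 y).const_add z
end

section
/- The Airy function Ai(z) = (1/π) · lim_{R→∞} ∫₀^R cos(zy + y³/3) dy is differentiable on ℝ, and its derivative is given by differentiating under the integral sign: for every z ∈ ℝ, Ai'(z) = −(1/π) · lim_{R→∞} ∫₀^R y · sin(zy + y³/3) dy, with this limit existing. -/
/-!
Write `φ(y) = z y + y³ / 3` for the Airy phase. Since `y sin φ = u · (-cos φ)'` with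
`u = y / φ' = y / (z + y²)`, and `u` is positive and decreasing once `y² ≥ |z|`, integration by
parts bounds the tails: `|∫_a^b y sin φ| ≤ 2 u(a) ≤ 4 / a` whenever `2 |z| ≤ a²`. So the partial
integrals `∫_0^R y sin φ` converge uniformly for `z` in bounded sets. They are the derivatives in
`z` of `-∫_0^R cos φ`, which converge to `-π Ai`, so uniform convergence of the derivatives gives
`(π Ai)' = -lim_R ∫_0^R y sin φ`.
-/

open Real Filter MeasureTheory intervalIntegral Set Topology

theorem abs_integral_mul_deriv_le_of_deriv_nonpos {u v u' v' : ℝ → ℝ} {a b K : ℝ} (hab : a ≤ b)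
    (hu : ∀ x ∈ Icc a b, HasDerivAt u (u' x) x) (hv : ∀ x ∈ Icc a b, HasDerivAt v (v' x) x)
    (hu'int : IntervalIntegrable u' volume a b) (hv'int : IntervalIntegrable v' volume a b)
    (hu'_nonpos : ∀ x ∈ Icc a b, u' x ≤ 0) (hub : 0 ≤ u b) (hvK : ∀ x ∈ Icc a b, |v x| ≤ K) :
    |∫ x in a..b, u x * v' x| ≤ 2 * K * u a := by
  rw [← uIcc_of_le hab] at hu hv
  have hFTC : ∫ x in a..b, u' x = u b - u a := integral_eq_sub_of_hasDerivAt hu hu'int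
  have hdecr : u b ≤ u a := by
    have := integral_nonneg (μ := volume) hab fun x hx => neg_nonneg.2 (hu'_nonpos x hx)
    rw [intervalIntegral.integral_neg, hFTC] at this
    linarith
  have hrem : ‖∫ x in a..b, u' x * v x‖ ≤ K * (u a - u b) := by
    refine (norm_integral_le_of_norm_le hab (ae_of_all _ fun x hx => ?_)
      (hu'int.neg.mul_const K)).trans_eq ?_
    · have hx' := Ioc_subset_Icc_self hx
      rw [norm_mul, Real.norm_eq_abs, Real.norm_eq_abs, abs_of_nonpos (hu'_nonpos x hx')]
      exact mul_le_mul_of_nonneg_left (hvK x hx') (neg_nonneg.2 (hu'_nonpos x hx'))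
    · simp only [Pi.neg_apply, intervalIntegral.integral_mul_const,
        intervalIntegral.integral_neg, hFTC]
      ring
  have hbdry : ∀ x ∈ Icc a b, 0 ≤ u x → |u x * v x| ≤ K * u x := fun x hx hux => by
    rw [abs_mul, abs_of_nonneg hux, mul_comm K]
    exact mul_le_mul_of_nonneg_left (hvK x hx) hux
  rw [integral_mul_deriv_eq_deriv_mul hu hv hu'int hv'int]
  have := hbdry b (right_mem_Icc.2 hab) hub
  have := hbdry a (left_mem_Icc.2 hab) (hub.trans hdecr)
  have := abs_sub (u b * v b - u a * v a) (∫ x in a..b, u' x * v x)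
  have := abs_sub (u b * v b) (u a * v a)
  rw [Real.norm_eq_abs] at hrem
  linarith

theorem abs_integral_mul_sin_airyPhase_le {z a b : ℝ} (ha : 0 < a) (hza : 2 * |z| ≤ a ^ 2)
    (hab : a ≤ b) : |∫ y in a..b, y * Real.sin (z * y + y ^ 3 / 3)| ≤ 4 / a := by
  have hsq : ∀ y ∈ Icc a b, a ^ 2 ≤ y ^ 2 := fun y hy => pow_le_pow_left₀ ha.le hy.1 2
  have hz_le : ∀ y ∈ Icc a b, z ≤ y ^ 2 := fun y hy => by
    linarith [hsq y hy, le_abs_self z, abs_nonneg z]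
  have hden : ∀ y ∈ Icc a b, 0 < z + y ^ 2 := fun y hy => by
    linarith [hsq y hy, neg_abs_le z, pow_pos ha 2]
  have hu : ∀ y ∈ Icc a b, HasDerivAt (fun y => y / (z + y ^ 2))
      ((z - y ^ 2) / (z + y ^ 2) ^ 2) y := fun y hy => by
    refine ((hasDerivAt_id' y).div ((hasDerivAt_pow 2 y).const_add z)
      (hden y hy).ne').congr_deriv ?_
    push_cast
    ring
  have hv : ∀ y ∈ Icc a b, HasDerivAt (fun y => -Real.cos (z * y + y ^ 3 / 3))
      (Real.sin (z * y + y ^ 3 / 3) * (z + y ^ 2)) y := fun y _ => by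
    refine (((hasDerivAt_id' y).const_mul z).fun_add
      ((hasDerivAt_pow 3 y).div_const 3)).cos.neg.congr_deriv ?_
    push_cast
    ring
  have hcongr : ∫ y in a..b, y * Real.sin (z * y + y ^ 3 / 3)
      = ∫ y in a..b, y / (z + y ^ 2) * (Real.sin (z * y + y ^ 3 / 3) * (z + y ^ 2)) := by
    refine integral_congr fun y hy => ?_
    rw [uIcc_of_le hab] at hy
    field_simp [(hden y hy).ne']
  have hu'int : IntervalIntegrable (fun y => (z - y ^ 2) / (z + y ^ 2) ^ 2) volume a b := by
    refine ContinuousOn.intervalIntegrable ?_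
    rw [uIcc_of_le hab]
    exact ContinuousOn.div (by fun_prop) (by fun_prop) fun y hy => pow_ne_zero 2 (hden y hy).ne'
  have hv'int : IntervalIntegrable (fun y => Real.sin (z * y + y ^ 3 / 3) * (z + y ^ 2))
      volume a b := (by fun_prop : Continuous _).intervalIntegrable _ _
  have hbound := abs_integral_mul_deriv_le_of_deriv_nonpos hab hu hv hu'int hv'int
    (fun y hy => div_nonpos_of_nonpos_of_nonneg (by linarith [hz_le y hy]) (sq_nonneg _))
    (div_nonneg (ha.le.trans hab) (hden b (right_mem_Icc.2 hab)).le)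
    (fun y _ => by rw [abs_neg]; exact abs_cos_le_one _)
  have hua : a / (z + a ^ 2) ≤ 2 / a := by
    rw [div_le_div_iff₀ (hden a (left_mem_Icc.2 hab)) ha]
    linarith [neg_abs_le z]
  rw [hcongr]
  linarith [show 4 / a = 2 * (2 / a) by ring]

theorem uniformCauchySeqOn_of_eventually_dist_le {ι α β : Type*} [SemilatticeSup ι] [Nonempty ι]
    [PseudoMetricSpace β] {F : ι → α → β} {s : Set α} {δ : ι → ℝ}
    (hδ : Tendsto δ atTop (𝓝 0))
    (h : ∀ᶠ a in atTop, ∀ b ≥ a, ∀ x ∈ s, dist (F b x) (F a x) ≤ δ a) :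
    UniformCauchySeqOn F atTop s := by
  rw [Metric.uniformCauchySeqOn_iff]
  intro ε hε
  obtain ⟨N, hN⟩ := eventually_atTop.1 ((hδ.eventually (gt_mem_nhds (half_pos hε))).and h)
  obtain ⟨hδN, hFN⟩ := hN N le_rfl
  refine ⟨N, fun m hm n hn x hx => ?_⟩
  calc dist (F m x) (F n x) ≤ dist (F m x) (F N x) + dist (F n x) (F N x) :=
        dist_triangle_right _ _ _
    _ ≤ δ N + δ N := add_le_add (hFN m hm x hx) (hFN n hn x hx)
    _ < ε := by linarith

theorem uniformCauchySeqOn_integral_mul_sin_airyPhase (M : ℝ) :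
    UniformCauchySeqOn (fun R z => ∫ y in (0:ℝ)..R, y * Real.sin (z * y + y ^ 3 / 3)) atTop
      (Metric.ball 0 M) := by
  refine uniformCauchySeqOn_of_eventually_dist_le
    (tendsto_const_nhds.div_atTop tendsto_id : Tendsto (fun a : ℝ => 4 / a) atTop (𝓝 0)) ?_
  filter_upwards [eventually_ge_atTop (max 1 (2 * M))] with a ha b hab z hz
  have ha1 : 1 ≤ a := le_of_max_le_left ha
  have hza : 2 * |z| ≤ a ^ 2 := by
    rw [mem_ball_zero_iff, Real.norm_eq_abs] at hz
    nlinarith [le_of_max_le_right ha]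
  have hint : ∀ c, IntervalIntegrable (fun y => y * Real.sin (z * y + y ^ 3 / 3)) volume 0 c :=
    fun c => (by fun_prop : Continuous _).intervalIntegrable _ _
  rw [Real.dist_eq, integral_interval_sub_left (hint b) (hint a)]
  exact abs_integral_mul_sin_airyPhase_le (by linarith) hza hab

theorem hasDerivAt_integral_cos_airyPhase (R z : ℝ) :
    HasDerivAt (fun z => ∫ y in (0:ℝ)..R, Real.cos (z * y + y ^ 3 / 3))
      (-∫ y in (0:ℝ)..R, y * Real.sin (z * y + y ^ 3 / 3)) z := by
  rw [← intervalIntegral.integral_neg]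
  refine (hasDerivAt_integral_of_dominated_loc_of_deriv_le (bound := fun y => |y|)
    (F' := fun z y => -(y * Real.sin (z * y + y ^ 3 / 3))) univ_mem
    (Eventually.of_forall fun _ => (by fun_prop : Continuous _).aestronglyMeasurable)
    ((by fun_prop : Continuous _).intervalIntegrable _ _)
    (by fun_prop : Continuous _).aestronglyMeasurable
    (ae_of_all _ fun y _ x _ => ?_) (continuous_abs.intervalIntegrable _ _)
    (ae_of_all _ fun y _ x _ => ?_)).2
  · rw [norm_neg, norm_mul, Real.norm_eq_abs, Real.norm_eq_abs]
    exact mul_le_of_le_one_right (abs_nonneg y) (abs_sin_le_one _)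
  · exact ((hasDerivAt_mul_const y).add_const _).cos.congr_deriv (by ring)

/-- The Airy function `Ai` (defined by the improper oscillatory integral
`Ai z = (1/π) lim_{R→∞} ∫₀^R cos (z y + y³/3) dy`) is differentiable on `ℝ`, and its
derivative is obtained by differentiating under the integral sign: for every `z`,
`Ai'(z) = -(1/π) lim_{R→∞} ∫₀^R y sin (z y + y³/3) dy`, the limit existing (i.e. the
partial integrals tend to `-π * Ai'(z)`). -/
theorem airy_differentiable_deriv_integral
    (Ai : ℝ → ℝ)
    (hAi : ∀ z : ℝ, Tendsto (fun R : ℝ => ∫ y in (0:ℝ)..R, Real.cos (z * y + y ^ 3 / 3))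
      atTop (nhds (π * Ai z))) :
    Differentiable ℝ Ai ∧
      ∀ z : ℝ, Tendsto (fun R : ℝ => ∫ y in (0:ℝ)..R, y * Real.sin (z * y + y ^ 3 / 3))
        atTop (nhds (-(π * deriv Ai z))) := by
  have hmem : ∀ z : ℝ, z ∈ Metric.ball (0 : ℝ) (|z| + 1) := fun z => by simp
  choose D hD using fun z => cauchy_map_iff_exists_tendsto.1
    ((uniformCauchySeqOn_integral_mul_sin_airyPhase (|z| + 1)).cauchy_map (hmem z))
  have hderiv : ∀ z, HasDerivAt Ai (π⁻¹ * -D z) z := fun z => by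
    have hπAi := hasDerivAt_of_tendstoUniformlyOn Metric.isOpen_ball
      ((uniformCauchySeqOn_integral_mul_sin_airyPhase _).tendstoUniformlyOn_of_tendsto
        fun x _ => hD x).neg
      (Eventually.of_forall fun R x _ => hasDerivAt_integral_cos_airyPhase R x)
      (fun x _ => hAi x) (hmem z)
    simpa [pi_ne_zero] using hπAi.const_mul π⁻¹
  refine ⟨fun z => (hderiv z).differentiableAt, fun z => ?_⟩
  rw [(hderiv z).deriv, mul_inv_cancel_left₀ pi_ne_zero, neg_neg]
  exact hD z
end
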